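/- arXiv:2311.03911 — 5 statements merged into one kernel-verified Lean document; each statement's English description precedes it below -/
import Mathlib

section
/- Let x ∈ ℝⁿ and let c satisfy 0 < c < 1/(n+1). If xᵀ(I − J)x ≤ c·xᵀx, where J = (1/n)·1ₙ1ₙᵀ, then either all entries of x are nonnegative or all entries of x are negative. -/
open Matrix

theorem stmt_2 (n : ℕ) (hn : 0 < n) (x : Fin n → ℝ) (c : ℝ)
    (hc : 0 < c) (hc' : c < 1 / ((n : ℝ) + 1))
    (J : Matrix (Fin n) (Fin n) ℝ)
    (hJ : J = (1 / (n : ℝ)) • Matrix.of (fun _ _ => (1 : ℝ)))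
    (h : x ⬝ᵥ ((1 - J).mulVec x) ≤ c * (x ⬝ᵥ x)) :
    (∀ i, 0 ≤ x i) ∨ (∀ i, x i < 0) := by
  by_cases hpos : ∀ i, 0 ≤ x i
  · exact Or.inl hpos
  right
  push_neg at hpos
  obtain ⟨i, hi⟩ := hpos
  set S := ∑ k, x k with hS
  set Q := ∑ k, x k ^ 2 with hQ
  have hnR : (0:ℝ) < n := by exact_mod_cast hn
  have hQpos : 0 < Q := by
    have h1 : 0 < x i ^ 2 := by nlinarith
    have h2 : x i ^ 2 ≤ Q := Finset.single_le_sum (f := fun k => x k ^ 2)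
      (fun k _ => sq_nonneg _) (Finset.mem_univ i)
    linarith
  have expand : x ⬝ᵥ ((1 - J).mulVec x) = Q - S^2/n := by
    subst hJ
    rw [hQ, hS]
    have h1 : (1 - (1/(n:ℝ)) • Matrix.of fun _ _ => (1:ℝ)).mulVec x
        = fun j => x j - (∑ k, x k)/n := by
      funext j
      simp [Matrix.mulVec, Matrix.sub_apply, Matrix.one_apply, dotProduct,
        Finset.sum_sub_distrib, sub_mul, Finset.sum_ite_eq, ← Finset.sum_div]
      rw [div_eq_mul_inv, Finset.sum_mul]
      exact Finset.sum_congr rfl fun k _ => by ring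
    rw [h1]
    simp only [dotProduct]
    rw [show (∑ k : Fin n, x k * (x k - (∑ l, x l)/(n:ℝ)))
        = ∑ k : Fin n, (x k ^ 2 - x k * ((∑ l, x l)/(n:ℝ))) from
      Finset.sum_congr rfl fun k _ => by ring,
      Finset.sum_sub_distrib, ← Finset.sum_mul]
    ring
  have hxx : x ⬝ᵥ x = Q := by
    simp only [dotProduct, hQ]
    exact Finset.sum_congr rfl (fun k _ => by ring)
  rw [expand, hxx] at h
  -- key: S^2 ≤ (n-1) * Q
  intro j
  by_contra hj
  push_neg at hj
  have hSle : S ^ 2 ≤ ((n:ℝ) - 1) * Q := by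
    rcases le_or_gt 0 S with hSpos | hSneg
    · have h1 : S ≤ ∑ k ∈ Finset.univ.erase i, x k := by
        rw [hS, ← Finset.add_sum_erase _ _ (Finset.mem_univ i)]
        linarith
      have h2 : (∑ k ∈ Finset.univ.erase i, x k) ^ 2 ≤
          ((Finset.univ.erase i).card : ℝ) * ∑ k ∈ Finset.univ.erase i, x k ^ 2 := by
        exact sq_sum_le_card_mul_sum_sq
      have hcard : ((Finset.univ.erase i).card : ℝ) = (n:ℝ) - 1 := by
        rw [Finset.card_erase_of_mem (Finset.mem_univ i)]
        simp [Nat.cast_sub hn]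
      have h3 : ∑ k ∈ Finset.univ.erase i, x k ^ 2 ≤ Q := by
        rw [hQ]
        exact Finset.sum_le_sum_of_subset_of_nonneg (Finset.subset_univ _)
          (fun k _ _ => sq_nonneg _)
      have h4 : S ^ 2 ≤ (∑ k ∈ Finset.univ.erase i, x k) ^ 2 := by
        apply sq_le_sq'
        · linarith
        · exact h1
      have hn1 : (0:ℝ) ≤ (n:ℝ) - 1 := by
        have : (1:ℝ) ≤ n := by exact_mod_cast hn
        linarith
      calc S ^ 2 ≤ (∑ k ∈ Finset.univ.erase i, x k) ^ 2 := h4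
        _ ≤ ((n:ℝ) - 1) * ∑ k ∈ Finset.univ.erase i, x k ^ 2 := by rw [← hcard]; exact h2
        _ ≤ ((n:ℝ) - 1) * Q := by nlinarith
    · have h1 : -S ≤ ∑ k ∈ Finset.univ.erase j, (-x k) := by
        rw [hS]
        rw [← Finset.sum_neg_distrib, ← Finset.add_sum_erase _ _ (Finset.mem_univ j)]
        linarith
      have h2 : (∑ k ∈ Finset.univ.erase j, (-x k)) ^ 2 ≤
          ((Finset.univ.erase j).card : ℝ) * ∑ k ∈ Finset.univ.erase j, (-x k) ^ 2 := by
        exact sq_sum_le_card_mul_sum_sq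
      have hcard : ((Finset.univ.erase j).card : ℝ) = (n:ℝ) - 1 := by
        rw [Finset.card_erase_of_mem (Finset.mem_univ j)]
        simp [Nat.cast_sub hn]
      have h3 : ∑ k ∈ Finset.univ.erase j, (-x k) ^ 2 ≤ Q := by
        rw [hQ]
        calc ∑ k ∈ Finset.univ.erase j, (-x k) ^ 2
            = ∑ k ∈ Finset.univ.erase j, x k ^ 2 := by
              exact Finset.sum_congr rfl (fun k _ => by ring)
          _ ≤ ∑ k, x k ^ 2 := Finset.sum_le_sum_of_subset_of_nonneg
              (Finset.subset_univ _) (fun k _ _ => sq_nonneg _)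
      have h4 : S ^ 2 ≤ (∑ k ∈ Finset.univ.erase j, (-x k)) ^ 2 := by
        have : S ^ 2 = (-S) ^ 2 := by ring
        rw [this]
        apply sq_le_sq'
        · linarith
        · exact h1
      have hn1 : (0:ℝ) ≤ (n:ℝ) - 1 := by
        have : (1:ℝ) ≤ n := by exact_mod_cast hn
        linarith
      calc S ^ 2 ≤ (∑ k ∈ Finset.univ.erase j, (-x k)) ^ 2 := h4
        _ ≤ ((n:ℝ) - 1) * ∑ k ∈ Finset.univ.erase j, (-x k) ^ 2 := by rw [← hcard]; exact h2
        _ ≤ ((n:ℝ) - 1) * Q := by nlinarith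
  -- derive contradiction
  have hmul : (n:ℝ) * (1 - c) * Q ≤ S ^ 2 := by
    have := h
    have h' : (Q - S^2/n) * n ≤ c * Q * n := by nlinarith
    have : Q * n - S^2 ≤ c * Q * n := by
      field_simp at h'
      linarith
    nlinarith
  have hnc : (n:ℝ) * c < 1 := by
    have h1 : c * ((n:ℝ) + 1) < 1 := by
      rw [lt_div_iff₀ (by positivity)] at hc'; exact hc'
    nlinarith
  nlinarith
end

section
/- Let x ∈ ℝⁿ and let c satisfy 0 < c < 1/(n+1). If xᵀ(I − J)x ≤ c·xᵀx with J = (1/n)·1ₙ1ₙᵀ, then for every index i ∈ {1,…,n}: xᵢ² ≥ (1/n)·(1 − √(cn/(1−c)))² · xᵀJx. -/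
open Matrix

theorem stmt_3 (n : ℕ) (hn : 0 < n) (x : Fin n → ℝ) (c : ℝ)
    (hc : 0 < c) (hc' : c < 1 / ((n : ℝ) + 1))
    (J : Matrix (Fin n) (Fin n) ℝ)
    (hJ : J = (1 / (n : ℝ)) • Matrix.of (fun _ _ => (1 : ℝ)))
    (h : x ⬝ᵥ ((1 - J).mulVec x) ≤ c * (x ⬝ᵥ x)) :
    ∀ i, (x i) ^ 2 ≥
      (1 / (n : ℝ)) * (1 - Real.sqrt (c * n / (1 - c))) ^ 2 * (x ⬝ᵥ J.mulVec x) := by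
  intro i
  have hn' : (0:ℝ) < (n:ℝ) := by exact_mod_cast hn
  have hn1 : (0:ℝ) < (n:ℝ) + 1 := by linarith
  have hc1 : (0:ℝ) < 1 - c := by
    have : (1:ℝ)/((n:ℝ)+1) ≤ 1 := by
      rw [div_le_one hn1]; linarith
    linarith
  have hcn : c * n < 1 - c := by
    have h1 := (lt_div_iff₀ hn1).mp hc'
    nlinarith
  set s := ∑ j, x j with hs
  set Q := ∑ j, x j ^ 2 with hQ
  set m := s / (n:ℝ) with hm
  have hJv : J.mulVec x = fun _ => m := by
    funext k
    simp only [hJ, Matrix.mulVec, dotProduct, Matrix.smul_apply, Matrix.of_apply,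
      smul_eq_mul, one_mul, mul_one]
    rw [← Finset.mul_sum, ← hs, hm]
    ring
  have hJx : x ⬝ᵥ J.mulVec x = s * m := by
    rw [hJv]
    simp [dotProduct, ← Finset.sum_mul, hs]
  have hIx : x ⬝ᵥ (1 - J).mulVec x = Q - s * m := by
    rw [Matrix.sub_mulVec, Matrix.one_mulVec, dotProduct_sub, hJx]
    congr 1
    simp [dotProduct, hQ, sq]
  have hxx : x ⬝ᵥ x = Q := by simp [dotProduct, hQ, sq]
  rw [hIx, hxx] at h
  -- variance identity
  have hvar : ∑ j, (x j - m)^2 = Q - s * m := by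
    have e : ∀ j : Fin n, (x j - m)^2 = x j ^2 - (2*m) * x j + m^2 := fun j => by ring
    rw [Finset.sum_congr rfl (fun j _ => e j)]
    rw [Finset.sum_add_distrib, Finset.sum_sub_distrib, ← Finset.mul_sum, ← hs, ← hQ,
      Finset.sum_const, Finset.card_univ, Fintype.card_fin, nsmul_eq_mul, hm]
    field_simp
    ring
  have hdi : (x i - m)^2 ≤ Q - s * m := by
    rw [← hvar]
    exact Finset.single_le_sum (f := fun j => (x j - m)^2) (fun j _ => sq_nonneg _) (Finset.mem_univ i)
  have hsm : s * m = s^2 / n := by rw [hm]; ring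
  -- Q ≤ s^2/(n(1-c))
  have hQb : Q ≤ s^2 / ((n:ℝ) * (1 - c)) := by
    rw [le_div_iff₀ (by positivity)]
    rw [hsm] at h
    have h2 : Q - s^2/n ≤ c * Q := h
    have h3 : (n:ℝ) * (s^2/n) = s^2 := by field_simp
    nlinarith [mul_le_mul_of_nonneg_left h2 hn'.le]
  set r := Real.sqrt (c * n / (1 - c)) with hr
  have hr0 : 0 ≤ r := Real.sqrt_nonneg _
  have hr2 : r^2 = c * n / (1 - c) := Real.sq_sqrt (by positivity)
  have hr1 : r < 1 := by
    nlinarith [hr2, (div_lt_one hc1).mpr hcn]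
  -- |x i - m| ≤ r * |s| / n
  have hd2 : (x i - m)^2 ≤ (r * |s| / n)^2 := by
    have : (r * |s| / n)^2 = (c * n / (1 - c)) * s^2 / n^2 := by
      rw [div_pow, mul_pow, hr2, sq_abs]
    rw [this]
    calc (x i - m)^2 ≤ Q - s*m := hdi
      _ ≤ c * Q := h
      _ ≤ c * (s^2 / ((n:ℝ)*(1-c))) := by
          exact mul_le_mul_of_nonneg_left hQb (le_of_lt hc)
      _ = c * n / (1 - c) * s^2 / n^2 := by field_simp
  have hd : |x i - m| ≤ r * |s| / n := by
    have h1 := Real.sqrt_le_sqrt hd2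
    rw [Real.sqrt_sq_eq_abs, Real.sqrt_sq_eq_abs] at h1
    rwa [abs_of_nonneg (div_nonneg (mul_nonneg hr0 (abs_nonneg s)) hn'.le)] at h1
  have hmabs : |m| = |s| / n := by rw [hm, abs_div, abs_of_pos hn']
  have htri : |m| - |x i - m| ≤ |x i| := by
    have := abs_sub_abs_le_abs_sub m (x i)
    rw [abs_sub_comm] at this
    linarith
  have hA : (1 - r) * |s| / n ≤ |x i| := by
    have : (1 - r) * |s| / n = |s|/n - r*|s|/n := by ring
    rw [this, ← hmabs]
    linarith
  have hA0 : 0 ≤ (1 - r) * |s| / n := div_nonneg (mul_nonneg (by linarith) (abs_nonneg s)) hn'.le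
  have hfin : ((1 - r) * |s| / n)^2 ≤ (x i)^2 := by
    calc ((1 - r) * |s| / n)^2 ≤ |x i|^2 := by
          exact pow_le_pow_left₀ hA0 hA 2
      _ = (x i)^2 := sq_abs _
  rw [ge_iff_le, hJx, hsm]
  have heq : ((1-r)*|s|/n)^2 = (1-r)^2 * |s|^2 / (n:ℝ)^2 := by ring
  calc (1/(n:ℝ)) * (1 - r)^2 * (s^2/n) = ((1-r)*|s|/n)^2 := by
        rw [heq, sq_abs]; ring
    _ ≤ (x i)^2 := hfin
end

section
/- Let G = diag(1 − α·δ₁²/(μ₁ + δ₁²), …, 1 − α·δₙ²/(μₙ + δₙ²)) with 0 < α ≤ 1, μᵢ > 0. Suppose for some index i, δᵢ² ≥ ω̲ > 0. Then for any x ∈ ℝⁿ: xᵀx − xᵀGᵀGx ≥ ζᵢ·xᵢ², where ζᵢ = (2 − αω̲/(μᵢ + ω̲))·(αω̲/(μᵢ + ω̲)). -/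
open Matrix

theorem stmt_10 (n : ℕ) (α : ℝ) (hα : 0 < α) (hα' : α ≤ 1)
    (μ δ : Fin n → ℝ) (hμ : ∀ j, 0 < μ j)
    (G : Matrix (Fin n) (Fin n) ℝ)
    (hG : G = Matrix.diagonal (fun j => 1 - α * (δ j) ^ 2 / (μ j + (δ j) ^ 2)))
    (ω : ℝ) (hω : 0 < ω) (i : Fin n) (hδ : (δ i) ^ 2 ≥ ω)
    (x : Fin n → ℝ) :
    x ⬝ᵥ x - x ⬝ᵥ ((Gᵀ * G).mulVec x) ≥
      (2 - α * ω / (μ i + ω)) * (α * ω / (μ i + ω)) * (x i) ^ 2 := by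
  set d : Fin n → ℝ := fun j => 1 - α * (δ j) ^ 2 / (μ j + (δ j) ^ 2) with hd
  -- basic bounds on s_j := α δ_j² / (μ_j + δ_j²)
  have hs : ∀ j, 0 ≤ α * (δ j) ^ 2 / (μ j + (δ j) ^ 2) ∧
      α * (δ j) ^ 2 / (μ j + (δ j) ^ 2) ≤ 1 := by
    intro j
    have hden : 0 < μ j + (δ j) ^ 2 := by nlinarith [hμ j, sq_nonneg (δ j)]
    constructor
    · exact div_nonneg (by positivity) hden.le
    · rw [div_le_one hden]
      nlinarith [sq_nonneg (δ j), (hμ j).le]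
  have hGG : Gᵀ * G = Matrix.diagonal (fun j => d j * d j) := by
    rw [hG, Matrix.diagonal_transpose, Matrix.diagonal_mul_diagonal]
  rw [hGG]
  have hsum : x ⬝ᵥ x - x ⬝ᵥ (Matrix.diagonal (fun j => d j * d j)).mulVec x
      = ∑ j, (1 - d j * d j) * x j ^ 2 := by
    simp only [Matrix.mulVec_diagonal, dotProduct]
    rw [← Finset.sum_sub_distrib]
    congr 1; ext j; ring
  rw [hsum]
  have hterm : ∀ j ∈ Finset.univ, 0 ≤ (1 - d j * d j) * x j ^ 2 := by
    intro j _
    have := hs j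
    have hd1 : 0 ≤ d j := by simp only [hd]; linarith [this.2]
    have hd2 : d j ≤ 1 := by simp only [hd]; linarith [this.1]
    nlinarith [sq_nonneg (x j), mul_le_one₀ hd2 hd1 hd2, sq_nonneg (d j)]
  have hsingle := Finset.single_le_sum hterm (Finset.mem_univ i)
  have hkey : (2 - α * ω / (μ i + ω)) * (α * ω / (μ i + ω)) ≤ 1 - d i * d i := by
    set t := α * ω / (μ i + ω) with ht
    set s := α * (δ i) ^ 2 / (μ i + (δ i) ^ 2) with hsdef
    have hdi : d i = 1 - s := rfl
    have hden1 : 0 < μ i + ω := by linarith [hμ i]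
    have hden2 : 0 < μ i + (δ i) ^ 2 := by nlinarith [hμ i]
    have hts : t ≤ s := by
      rw [ht, hsdef, div_le_div_iff₀ hden1 hden2]
      nlinarith [mul_nonneg hα.le (mul_nonneg (hμ i).le (sub_nonneg.2 hδ))]
    have ht0 : 0 ≤ t := by positivity
    have hs1 : s ≤ 1 := (hs i).2
    rw [hdi]
    nlinarith
  calc (2 - α * ω / (μ i + ω)) * (α * ω / (μ i + ω)) * (x i) ^ 2
      ≤ (1 - d i * d i) * x i ^ 2 := by nlinarith [sq_nonneg (x i)]
    _ ≤ ∑ j, (1 - d j * d j) * x j ^ 2 := hsingle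
end

section
/- Let {u(k)}, {p(k)}, {q(k)} be real sequences with u(k) ≥ 0, p(k) ≥ 0, 0 < q(k) ≤ 1 for all k, satisfying u(k+1) ≤ (1 − q(k))u(k) + p(k). If Σₖ q(k) = ∞ and limₖ p(k)/q(k) = 0, then limₖ u(k) = 0. -/
open Filter

theorem stmt_12 (u p q : ℕ → ℝ)
    (hu : ∀ k, 0 ≤ u k) (hp : ∀ k, 0 ≤ p k)
    (hq : ∀ k, 0 < q k) (hq' : ∀ k, q k ≤ 1)
    (hrec : ∀ k, u (k + 1) ≤ (1 - q k) * u k + p k)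
    (hqsum : Tendsto (fun n => ∑ k ∈ Finset.range n, q k) atTop atTop)
    (hpq : Tendsto (fun k => p k / q k) atTop (nhds 0)) :
    Tendsto u atTop (nhds 0) := by
  rw [Metric.tendsto_atTop]
  intro ε hε
  -- get N with p k ≤ (ε/4) * q k for k ≥ N
  have h4 : (0:ℝ) < ε / 4 := by linarith
  obtain ⟨N, hN⟩ := (Metric.tendsto_atTop.mp hpq (ε/4) h4)
  have hpb : ∀ k ≥ N, p k ≤ ε / 4 * q k := by
    intro k hk
    have := hN k hk
    rw [Real.dist_eq, sub_zero] at this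
    have h1 : p k / q k < ε / 4 := lt_of_abs_lt this
    have := (div_lt_iff₀ (hq k)).mp h1
    linarith
  set S : ℕ → ℝ := fun n => ∑ k ∈ Finset.range n, q k with hS
  -- Claim B: ∃ m ≥ N, u m ≤ ε/2
  have hB : ∃ m, m ≥ N ∧ u m ≤ ε / 2 := by
    by_contra hcon
    push_neg at hcon
    have hbig : ∀ m ≥ N, ε / 2 < u m := fun m hm => (hcon m hm)
    -- u (N+n) ≤ u N - (ε/4) * (S (N+n) - S N)
    have key : ∀ n, u (N + n) ≤ u N - ε / 4 * (S (N + n) - S N) := by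
      intro n
      induction n with
      | zero => simp
      | succ n ih =>
        have hk : N + n ≥ N := Nat.le_add_right N n
        have h1 := hrec (N + n)
        have h2 := hpb (N + n) hk
        have h3 := hbig (N + n) hk
        have h4 := hq (N + n)
        have hSs : S (N + n + 1) = S (N + n) + q (N + n) := by
          simp [hS, Finset.sum_range_succ]
        have step : u (N + n + 1) ≤ u (N + n) - ε / 4 * q (N + n) := by
          nlinarith [h4.le]
        have : N + (n + 1) = N + n + 1 := rfl
        rw [this, hSs]
        linarith
    -- choose m with S m large
    obtain ⟨M, hM⟩ := eventually_atTop.mp ((tendsto_atTop.mp hqsum) (S N + (u N + 1) * 4 / ε))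
    have hmN : N ≤ max M N := le_max_right _ _
    have hSm : S N + (u N + 1) * 4 / ε ≤ S (max M N) := hM _ (le_max_left _ _)
    obtain ⟨n, hn⟩ := Nat.exists_eq_add_of_le hmN
    rw [hn] at hSm
    have h1 := key n
    have h2 := hu (N + n)
    have : ε / 4 * ((u N + 1) * 4 / ε) = u N + 1 := by
      field_simp
    nlinarith [h1, h2, hSm]
  obtain ⟨m, hmN, hm⟩ := hB
  -- invariance: ∀ k ≥ m, u k ≤ ε/2
  refine ⟨m, fun n hn => ?_⟩
  have inv : ∀ j, u (m + j) ≤ ε / 2 := by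
    intro j
    induction j with
    | zero => simpa using hm
    | succ j ih =>
      have hk : m + j ≥ N := le_trans hmN (Nat.le_add_right m j)
      have h1 := hrec (m + j)
      have h2 := hpb (m + j) hk
      have h3 := hq (m + j)
      have h4 := hq' (m + j)
      have h5 := hu (m + j)
      have : m + (j + 1) = m + j + 1 := rfl
      rw [this]
      nlinarith
  obtain ⟨j, rfl⟩ := Nat.exists_eq_add_of_le hn
  have := inv j
  rw [Real.dist_eq, sub_zero, abs_of_nonneg (hu _)]
  linarith
end

section
/- Let Φ ∈ ℝ^{n×n} be doubly stochastic with all entries at least a > 0, and m = n·a with 0 < m < 1. Then for any x ∈ ℝⁿ: xᵀΦᵀ(I − J)Φx ≤ (1 − m)²·xᵀ(I − J)x, where J = (1/n)1ₙ1ₙᵀ. -/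
/-!
Since `Φ` has all entries `≥ a`, `Φ - m J` is `(1 - m)` times a doubly stochastic matrix `P`,
so `Φ = m J + (1 - m) P`. The centering matrix `1 - J` is an orthogonal projection killing `J`,
hence `Φᵀ (1 - J) Φ = (1 - m)² Pᵀ (1 - J) P`. Finally a doubly stochastic `P` commutes with `J`
and, by Jensen's inequality row by row, does not increase the Euclidean norm, so
`xᵀ Pᵀ (1 - J) P x = ‖P (1 - J) x‖² ≤ ‖(1 - J) x‖² = xᵀ (1 - J) x`.
-/

open Matrix Finset

namespace Matrix

variable {ι : Type*} [Fintype ι]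

noncomputable def averagingMatrix (ι : Type*) [Fintype ι] : Matrix ι ι ℝ :=
  (Fintype.card ι : ℝ)⁻¹ • of fun _ _ => 1

@[simp]
lemma averagingMatrix_apply (i j : ι) : averagingMatrix ι i j = (Fintype.card ι : ℝ)⁻¹ := by
  simp [averagingMatrix]

@[simp]
lemma transpose_averagingMatrix : (averagingMatrix ι)ᵀ = averagingMatrix ι := by
  ext; simp

lemma averagingMatrix_mul_self : averagingMatrix ι * averagingMatrix ι = averagingMatrix ι := by
  ext i j
  have : Nonempty ι := ⟨i⟩
  simp [mul_apply]

lemma dotProduct_mulVec_transpose_mul_self {R : Type*} [CommSemiring R]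
    (B : Matrix ι ι R) (x : ι → R) : x ⬝ᵥ (Bᵀ * B) *ᵥ x = B *ᵥ x ⬝ᵥ B *ᵥ x := by
  rw [← mulVec_mulVec, dotProduct_mulVec, vecMul_transpose]

lemma transpose_mul_one_sub_mul_smul_add_smul {R : Type*} [CommRing R] [DecidableEq ι]
    {J : Matrix ι ι R} (hJt : Jᵀ = J) (hJJ : J * J = J) (P : Matrix ι ι R) (m c : R) :
    (m • J + c • P)ᵀ * (1 - J) * (m • J + c • P) = c ^ 2 • (Pᵀ * (1 - J) * P) := by
  have hl : J * (1 - J) = 0 := by rw [mul_sub, mul_one, hJJ, sub_self]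
  have hr : (1 - J) * J = 0 := by rw [sub_mul, one_mul, hJJ, sub_self]
  rw [transpose_add, transpose_smul, transpose_smul, hJt, add_mul, smul_mul, hl, smul_zero,
    zero_add, Matrix.mul_assoc, mul_add, Matrix.mul_smul, hr, smul_zero, zero_add, Matrix.smul_mul,
    Matrix.mul_smul, Matrix.mul_smul, smul_smul, sq, Matrix.mul_assoc]

variable [DecidableEq ι] {P : Matrix ι ι ℝ}

lemma mul_averagingMatrix_of_mem_doublyStochastic (hP : P ∈ doublyStochastic ℝ ι) :
    P * averagingMatrix ι = averagingMatrix ι := by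
  ext i j
  simp [mul_apply, ← sum_mul, sum_row_of_mem_doublyStochastic hP]

lemma averagingMatrix_mul_of_mem_doublyStochastic (hP : P ∈ doublyStochastic ℝ ι) :
    averagingMatrix ι * P = averagingMatrix ι := by
  ext i j
  simp [mul_apply, ← mul_sum, sum_col_of_mem_doublyStochastic hP]

lemma mulVec_dotProduct_mulVec_le_of_mem_doublyStochastic (hP : P ∈ doublyStochastic ℝ ι)
    (y : ι → ℝ) : P *ᵥ y ⬝ᵥ P *ᵥ y ≤ y ⬝ᵥ y := by
  calc P *ᵥ y ⬝ᵥ P *ᵥ y = ∑ i, (∑ j, P i j * y j) ^ 2 := by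
        simp [dotProduct, mulVec, sq]
    _ ≤ ∑ i, ∑ j, P i j * y j ^ 2 := by
        gcongr with i
        exact even_two.convexOn_pow.map_sum_le (fun j _ => nonneg_of_mem_doublyStochastic hP)
          (sum_row_of_mem_doublyStochastic hP i) (fun j _ => Set.mem_univ _)
    _ = y ⬝ᵥ y := by
        rw [sum_comm]
        simp [dotProduct, ← sum_mul, sum_col_of_mem_doublyStochastic hP, sq]

lemma dotProduct_transpose_mul_one_sub_averagingMatrix_mul_mulVec_le
    (hP : P ∈ doublyStochastic ℝ ι) (x : ι → ℝ) :
    x ⬝ᵥ (Pᵀ * (1 - averagingMatrix ι) * P) *ᵥ x ≤ x ⬝ᵥ (1 - averagingMatrix ι) *ᵥ x := by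
  set Q := 1 - averagingMatrix ι
  have hQt : Qᵀ = Q := by simp [Q]
  have hQQ : Q * Q = Q := by simp [Q, sub_mul, mul_sub, averagingMatrix_mul_self]
  have hQP : Q * P = P * Q := by
    simp [Q, sub_mul, mul_sub, mul_averagingMatrix_of_mem_doublyStochastic hP,
      averagingMatrix_mul_of_mem_doublyStochastic hP]
  have hsq : Pᵀ * Q * P = (P * Q)ᵀ * (P * Q) := by
    rw [← hQP, transpose_mul, hQt, Matrix.mul_assoc, Matrix.mul_assoc, ← Matrix.mul_assoc Q Q P,
      hQQ]
  calc x ⬝ᵥ (Pᵀ * Q * P) *ᵥ x = P *ᵥ (Q *ᵥ x) ⬝ᵥ P *ᵥ (Q *ᵥ x) := by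
        rw [hsq, dotProduct_mulVec_transpose_mul_self, mulVec_mulVec]
    _ ≤ Q *ᵥ x ⬝ᵥ Q *ᵥ x := mulVec_dotProduct_mulVec_le_of_mem_doublyStochastic hP _
    _ = x ⬝ᵥ Q *ᵥ x := by rw [← dotProduct_mulVec_transpose_mul_self, hQt, hQQ]

lemma exists_mem_doublyStochastic_eq_smul_averagingMatrix_add {Φ : Matrix ι ι ℝ}
    (hΦ : Φ ∈ doublyStochastic ℝ ι) {a : ℝ} (ha : ∀ i j, a ≤ Φ i j)
    (h1 : Fintype.card ι * a ≤ 1) :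
    ∃ P ∈ doublyStochastic ℝ ι,
      Φ = (Fintype.card ι * a) • averagingMatrix ι + (1 - Fintype.card ι * a) • P := by
  set m := (Fintype.card ι : ℝ) * a
  have hmJ : ∀ i j, (m • averagingMatrix ι) i j = a := fun i j => by
    have : Nonempty ι := ⟨i⟩
    rw [smul_apply, averagingMatrix_apply, smul_eq_mul, mul_right_comm,
      mul_inv_cancel₀ (Nat.cast_ne_zero.2 Fintype.card_ne_zero), one_mul]
  obtain ⟨P, hP, hΦP⟩ :=
    (exists_mem_doublyStochastic_eq_smul_iff (M := Φ - m • averagingMatrix ι) (sub_nonneg.2 h1)).2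
    ⟨fun i j => by rw [sub_apply, hmJ, sub_nonneg]; exact ha i j,
      fun i => by simp [hmJ, sum_sub_distrib, sum_row_of_mem_doublyStochastic hΦ, m],
      fun j => by simp [hmJ, sum_sub_distrib, sum_col_of_mem_doublyStochastic hΦ, m]⟩
  exact ⟨P, hP, by rw [← hΦP, add_sub_cancel]⟩

end Matrix

theorem stmt_15_general (n : ℕ) (Φ : Matrix (Fin n) (Fin n) ℝ)
    (hpos : ∀ i j, 0 ≤ Φ i j)
    (hrow : ∀ i, ∑ j, Φ i j = 1)
    (hcol : ∀ j, ∑ i, Φ i j = 1)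
    (a : ℝ) (hent : ∀ i j, a ≤ Φ i j)
    (m : ℝ) (hm : m = n * a) (hm1 : m < 1)
    (J : Matrix (Fin n) (Fin n) ℝ)
    (hJ : J = (1 / (n : ℝ)) • Matrix.of (fun _ _ => (1 : ℝ)))
    (x : Fin n → ℝ) :
    x ⬝ᵥ ((Φᵀ * (1 - J) * Φ).mulVec x) ≤ (1 - m) ^ 2 * (x ⬝ᵥ ((1 - J).mulVec x)) := by
  have hJ' : J = averagingMatrix (Fin n) := by rw [hJ, averagingMatrix, Fintype.card_fin, one_div]
  have hΦ : Φ ∈ doublyStochastic ℝ (Fin n) := mem_doublyStochastic_iff_sum.2 ⟨hpos, hrow, hcol⟩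
  obtain ⟨P, hP, rfl⟩ := exists_mem_doublyStochastic_eq_smul_averagingMatrix_add hΦ hent
    (by rw [Fintype.card_fin, ← hm]; exact hm1.le)
  subst hJ'
  rw [Fintype.card_fin, ← hm, transpose_mul_one_sub_mul_smul_add_smul transpose_averagingMatrix
    averagingMatrix_mul_self, smul_mulVec, dotProduct_smul, smul_eq_mul]
  exact mul_le_mul_of_nonneg_left
    (dotProduct_transpose_mul_one_sub_averagingMatrix_mul_mulVec_le hP x) (sq_nonneg _)

theorem stmt_15 (n : ℕ) (hn : 0 < n) (Φ : Matrix (Fin n) (Fin n) ℝ)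
    (hpos : ∀ i j, 0 ≤ Φ i j)
    (hrow : ∀ i, ∑ j, Φ i j = 1)
    (hcol : ∀ j, ∑ i, Φ i j = 1)
    (a : ℝ) (ha : 0 < a) (hent : ∀ i j, a ≤ Φ i j)
    (m : ℝ) (hm : m = n * a) (hm0 : 0 < m) (hm1 : m < 1)
    (J : Matrix (Fin n) (Fin n) ℝ)
    (hJ : J = (1 / (n : ℝ)) • Matrix.of (fun _ _ => (1 : ℝ)))
    (x : Fin n → ℝ) :
    x ⬝ᵥ ((Φᵀ * (1 - J) * Φ).mulVec x) ≤ (1 - m) ^ 2 * (x ⬝ᵥ ((1 - J).mulVec x)) :=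
  stmt_15_general n Φ hpos hrow hcol a hent m hm hm1 J hJ x
end
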